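/- Admissibility of Harrop's rule in intuitionistic propositional logic: For all propositional formulas A, B, C, if ⊢_IPC ¬A→(B∨C), then ⊢_IPC (¬A→B)∨(¬A→C). -/

import Mathlib

/-!
Common framework for proof-theoretic validity (Prawitz / Piecha–Schroeder-Heister style).

* Propositional formulas over countably many atoms (`ℕ`), with `⊥`, `∧`, `∨`, `→`;
  `¬A` abbreviates `A → ⊥`.
* Higher-level atomic rules: a rule has a finite list of premises, each premise being
  a pair of (a finite list of lower-level rules that may be discharged, an atomic
  conclusion), together with an atomic conclusion.  An atomic axiom `p̄` is
  `HLRule.mk [] p`; an assumption of an atom is identified with its axiom rule.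
* `AtDeriv S p`: the atom `p` is derivable using only rules of `S`
  (discharged rules become available).
* `Deriv S Γ φ`: natural deduction NJ augmented with the atomic rules in `S`,
  from hypotheses `Γ`.  `⊢_IPC` is `Deriv ∅ ∅`.
* `Valid 𝔖 S φ` formalizes "there is a closed `S`-valid argument for `φ`" relative to
  the proof-theoretic system `𝔖` (acceptable extensions of `S` are the supersets of `S`
  belonging to `𝔖`).  Unfolding the inductive definition of `S`-validity of arguments
  (atomic case, closed introduction case, closed non-introduction case, open case)
  clause-by-clause on the conclusion yields exactly the following recursion on formulas:
  a closed valid argument for `A ∧ B` reduces (via the non-introduction case) to one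
  ending in `∧`-introduction, i.e. closed valid arguments for `A` and `B`; similarly for
  `∨`; a closed valid argument for `A → B` reduces to one ending in `→`-introduction,
  whose immediate subargument is an open argument of `B` from the assumption `A`, which
  by the open case is valid iff every acceptable extension `S' ∈ 𝔖` of `S` having a
  closed `S'`-valid argument for `A` has one for `B`; a closed valid argument for an
  atom `p` exists iff `p` is `S`-derivable; and for `⊥` (which has no introduction rule,
  and is governed by the rules `⊥/p` for every atom `p`) iff every atom is `S`-derivable.
-/

/-- Propositional formulas over atoms `ℕ`. -/
inductive PropForm : Type
  | atom : ℕ → PropForm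
  | falsum : PropForm
  | conj : PropForm → PropForm → PropForm
  | disj : PropForm → PropForm → PropForm
  | impl : PropForm → PropForm → PropForm
  deriving DecidableEq

/-- `¬A` abbreviates `A → ⊥`. -/
def PropForm.neg (A : PropForm) : PropForm := .impl A .falsum

/-- Higher-level atomic rules. -/
inductive HLRule : Type
  | mk : List (List HLRule × ℕ) → ℕ → HLRule

/-- `AtDeriv S p`: the atom `p` is derivable using only the atomic rules in `S`;
applying a rule requires deriving each premise with its discharged rules made available. -/
inductive AtDeriv : Set HLRule → ℕ → Prop
  | app (S : Set HLRule) (prems : List (List HLRule × ℕ)) (concl : ℕ)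
      (hmem : HLRule.mk prems concl ∈ S)
      (hprem : ∀ pr ∈ prems, AtDeriv (S ∪ {R | R ∈ pr.1}) pr.2) :
      AtDeriv S concl

/-- Natural deduction NJ for intuitionistic propositional logic, augmented with the
atomic rules in `S`, with hypotheses `Γ`.  `Deriv ∅ Γ φ` is `Γ ⊢_IPC φ`. -/
inductive Deriv : Set HLRule → Set PropForm → PropForm → Prop
  | hyp {S : Set HLRule} {Γ : Set PropForm} {A : PropForm} :
      A ∈ Γ → Deriv S Γ A
  | falsumE {S : Set HLRule} {Γ : Set PropForm} {A : PropForm} :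
      Deriv S Γ .falsum → Deriv S Γ A
  | andI {S : Set HLRule} {Γ : Set PropForm} {A B : PropForm} :
      Deriv S Γ A → Deriv S Γ B → Deriv S Γ (.conj A B)
  | andE1 {S : Set HLRule} {Γ : Set PropForm} {A B : PropForm} :
      Deriv S Γ (.conj A B) → Deriv S Γ A
  | andE2 {S : Set HLRule} {Γ : Set PropForm} {A B : PropForm} :
      Deriv S Γ (.conj A B) → Deriv S Γ B
  | orI1 {S : Set HLRule} {Γ : Set PropForm} {A B : PropForm} :
      Deriv S Γ A → Deriv S Γ (.disj A B)
  | orI2 {S : Set HLRule} {Γ : Set PropForm} {A B : PropForm} :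
      Deriv S Γ B → Deriv S Γ (.disj A B)
  | orE {S : Set HLRule} {Γ : Set PropForm} {A B C : PropForm} :
      Deriv S Γ (.disj A B) → Deriv S (insert A Γ) C → Deriv S (insert B Γ) C →
      Deriv S Γ C
  | implI {S : Set HLRule} {Γ : Set PropForm} {A B : PropForm} :
      Deriv S (insert A Γ) B → Deriv S Γ (.impl A B)
  | implE {S : Set HLRule} {Γ : Set PropForm} {A B : PropForm} :
      Deriv S Γ (.impl A B) → Deriv S Γ A → Deriv S Γ B
  | rule {S : Set HLRule} {Γ : Set PropForm}
      (prems : List (List HLRule × ℕ)) (concl : ℕ) :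
      HLRule.mk prems concl ∈ S →
      (∀ pr ∈ prems, Deriv (S ∪ {R | R ∈ pr.1}) Γ (.atom pr.2)) →
      Deriv S Γ (.atom concl)

/-- `⊢_IPC φ` : derivability of `φ` in intuitionistic propositional natural deduction. -/
def IPC (φ : PropForm) : Prop := Deriv ∅ ∅ φ

/-- Auxiliary form of validity, by recursion on the formula. -/
def ValidAux (𝔖 : Set (Set HLRule)) : PropForm → Set HLRule → Prop
  | .atom p, S => AtDeriv S p
  | .falsum, S => ∀ a : ℕ, AtDeriv S a
  | .conj A B, S => ValidAux 𝔖 A S ∧ ValidAux 𝔖 B S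
  | .disj A B, S => ValidAux 𝔖 A S ∨ ValidAux 𝔖 B S
  | .impl A B, S => ∀ S' ∈ 𝔖, S ⊆ S' → ValidAux 𝔖 A S' → ValidAux 𝔖 B S'

/-- `Valid 𝔖 S φ`: relative to the proof-theoretic system `𝔖` (in which the acceptable
extensions of `S` are exactly the supersets of `S` belonging to `𝔖`), there is a closed
`S`-valid argument for `φ`. -/
def Valid (𝔖 : Set (Set HLRule)) (S : Set HLRule) (φ : PropForm) : Prop :=
  ValidAux 𝔖 φ S

/-- `𝔖 ⊨ φ`: for every `S ∈ 𝔖` there is a closed `S`-valid argument for `φ`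
(acceptable extensions taken in `𝔖`). -/
def Models (𝔖 : Set (Set HLRule)) (φ : PropForm) : Prop :=
  ∀ S ∈ 𝔖, Valid 𝔖 S φ

/-- The complete proof-theoretic system: all sets of atomic rules of all levels. -/
def completeSystem : Set (Set HLRule) := Set.univ

/-- `S`-validity of the open one-premise/one-assumption argument from `A` to `B`
(relative to `𝔖`): by the open case, for every acceptable extension `S' ∈ 𝔖` of `S`,
substituting any closed `S'`-valid argument for the assumption `A` yields an
`S'`-valid closed argument, which (the final step not being an introduction rule)
amounts to the existence of a closed `S'`-valid argument for `B`. -/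
def OpenArgValid1 (𝔖 : Set (Set HLRule)) (S : Set HLRule) (A B : PropForm) : Prop :=
  ∀ S' ∈ 𝔖, S ⊆ S' → Valid 𝔖 S' A → Valid 𝔖 S' B

/-!
The proof uses the Aczel slash `Γ | φ` relative to the hypotheses `Γ = {¬A}`: it is like the
Kleene slash, with derivability from `Γ` as the clause for atoms and for `⊥`. Derivations from slashed
hypotheses have slashed conclusions. Since `¬A` is a Harrop formula it slashes itself (a
slashed `A` is derivable from `¬A`, hence so is `⊥`), so the derivation of `B ∨ C` from `¬A`
yields `{¬A} | B` or `{¬A} | C`, hence `¬A ⊢ B` or `¬A ⊢ C`.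
-/

namespace Deriv

variable {S : Set HLRule} {Γ Δ : Set PropForm} {φ : PropForm}

theorem mono (h : Deriv S Γ φ) {Γ' : Set PropForm} (hΓ : Γ ⊆ Γ') : Deriv S Γ' φ := by
  induction h generalizing Γ' with
  | hyp hm => exact hyp (hΓ hm)
  | falsumE _ ih => exact falsumE (ih hΓ)
  | andI _ _ ih₁ ih₂ => exact andI (ih₁ hΓ) (ih₂ hΓ)
  | andE1 _ ih => exact andE1 (ih hΓ)
  | andE2 _ ih => exact andE2 (ih hΓ)
  | orI1 _ ih => exact orI1 (ih hΓ)
  | orI2 _ ih => exact orI2 (ih hΓ)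
  | orE _ _ _ ih ih₁ ih₂ =>
      exact orE (ih hΓ) (ih₁ (Set.insert_subset_insert hΓ)) (ih₂ (Set.insert_subset_insert hΓ))
  | implI _ ih => exact implI (ih (Set.insert_subset_insert hΓ))
  | implE _ _ ih₁ ih₂ => exact implE (ih₁ hΓ) (ih₂ hΓ)
  | rule prems concl hmem _ ih => exact rule prems concl hmem fun pr hpr => ih pr hpr hΓ

theorem mono_rules (h : Deriv S Γ φ) {S' : Set HLRule} (hS : S ⊆ S') : Deriv S' Γ φ := by
  induction h generalizing S' with
  | hyp hm => exact hyp hm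
  | falsumE _ ih => exact falsumE (ih hS)
  | andI _ _ ih₁ ih₂ => exact andI (ih₁ hS) (ih₂ hS)
  | andE1 _ ih => exact andE1 (ih hS)
  | andE2 _ ih => exact andE2 (ih hS)
  | orI1 _ ih => exact orI1 (ih hS)
  | orI2 _ ih => exact orI2 (ih hS)
  | orE _ _ _ ih ih₁ ih₂ => exact orE (ih hS) (ih₁ hS) (ih₂ hS)
  | implI _ ih => exact implI (ih hS)
  | implE _ _ ih₁ ih₂ => exact implE (ih₁ hS) (ih₂ hS)
  | rule prems concl hmem _ ih =>
      exact rule prems concl (hS hmem) fun pr hpr => ih pr hpr (Set.union_subset_union_left _ hS)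

theorem forall_insert {A : PropForm} (hΔ : ∀ ψ ∈ Δ, Deriv S Γ ψ) :
    ∀ ψ ∈ insert A Δ, Deriv S (insert A Γ) ψ :=
  Set.forall_insert_of_forall (fun ψ hψ => (hΔ ψ hψ).mono (Set.subset_insert _ _))
    (hyp (Set.mem_insert _ _))

theorem cut (h : Deriv S Δ φ) (hΔ : ∀ ψ ∈ Δ, Deriv S Γ ψ) : Deriv S Γ φ := by
  induction h generalizing Γ with
  | hyp hm => exact hΔ _ hm
  | falsumE _ ih => exact falsumE (ih hΔ)
  | andI _ _ ih₁ ih₂ => exact andI (ih₁ hΔ) (ih₂ hΔ)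
  | andE1 _ ih => exact andE1 (ih hΔ)
  | andE2 _ ih => exact andE2 (ih hΔ)
  | orI1 _ ih => exact orI1 (ih hΔ)
  | orI2 _ ih => exact orI2 (ih hΔ)
  | orE _ _ _ ih ih₁ ih₂ => exact orE (ih hΔ) (ih₁ (forall_insert hΔ)) (ih₂ (forall_insert hΔ))
  | implI _ ih => exact implI (ih (forall_insert hΔ))
  | implE _ _ ih₁ ih₂ => exact implE (ih₁ hΔ) (ih₂ hΔ)
  | rule prems concl hmem _ ih =>
      exact rule prems concl hmem fun pr hpr =>
        ih pr hpr fun ψ hψ => (hΔ ψ hψ).mono_rules Set.subset_union_left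

end Deriv

def Slash (Γ : Set PropForm) : PropForm → Prop
  | .atom p => Deriv ∅ Γ (.atom p)
  | .falsum => Deriv ∅ Γ .falsum
  | .conj B C => Slash Γ B ∧ Slash Γ C
  | .disj B C => Deriv ∅ Γ (.disj B C) ∧ (Slash Γ B ∨ Slash Γ C)
  | .impl B C => Deriv ∅ Γ (.impl B C) ∧ (Slash Γ B → Slash Γ C)

namespace Slash

variable {Γ : Set PropForm}

theorem deriv : ∀ {φ : PropForm}, Slash Γ φ → Deriv ∅ Γ φ
  | .atom _, h => h
  | .falsum, h => h
  | .conj _ _, h => .andI h.1.deriv h.2.deriv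
  | .disj _ _, h => h.1
  | .impl _ _, h => h.1

theorem of_deriv_falsum (hf : Deriv ∅ Γ .falsum) : ∀ φ : PropForm, Slash Γ φ
  | .atom _ => .falsumE hf
  | .falsum => hf
  | .conj B C => ⟨of_deriv_falsum hf B, of_deriv_falsum hf C⟩
  | .disj B _ => ⟨.falsumE hf, .inl (of_deriv_falsum hf B)⟩
  | .impl _ C => ⟨.falsumE hf, fun _ => of_deriv_falsum hf C⟩

theorem of_deriv {Δ : Set PropForm} {φ : PropForm} (h : Deriv ∅ Δ φ)
    (hΔ : ∀ ψ ∈ Δ, Slash Γ ψ) : Slash Γ φ := by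
  generalize hS : (∅ : Set HLRule) = S at h
  induction h generalizing Γ with
  | hyp hm => exact hΔ _ hm
  | falsumE _ ih => exact of_deriv_falsum (ih hΔ hS) _
  | andI _ _ ih₁ ih₂ => exact ⟨ih₁ hΔ hS, ih₂ hΔ hS⟩
  | andE1 _ ih => exact (ih hΔ hS).1
  | andE2 _ ih => exact (ih hΔ hS).2
  | orI1 _ ih => exact ⟨.orI1 (ih hΔ hS).deriv, .inl (ih hΔ hS)⟩
  | orI2 _ ih => exact ⟨.orI2 (ih hΔ hS).deriv, .inr (ih hΔ hS)⟩
  | orE _ _ _ ih ih₁ ih₂ =>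
      rcases (ih hΔ hS).2 with hB | hC
      · exact ih₁ (Set.forall_insert_of_forall hΔ hB) hS
      · exact ih₂ (Set.forall_insert_of_forall hΔ hC) hS
  | implI hBC ih =>
      subst hS
      exact ⟨.implI (hBC.cut (Deriv.forall_insert fun ψ hψ => (hΔ ψ hψ).deriv)),
        fun hB => ih (Set.forall_insert_of_forall hΔ hB) rfl⟩
  | implE _ _ ih₁ ih₂ => exact (ih₁ hΔ hS).2 (ih₂ hΔ hS)
  | rule _ _ hmem _ _ =>
      subst hS
      exact absurd hmem (Set.notMem_empty _)

theorem neg_of_mem {A : PropForm} (hA : A.neg ∈ Γ) : Slash Γ A.neg :=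
  ⟨.hyp hA, fun h => .implE (.hyp hA) h.deriv⟩

end Slash

/-- **Admissibility of Harrop's rule in intuitionistic propositional logic.**
If `⊢_IPC ¬A → (B ∨ C)` then `⊢_IPC (¬A → B) ∨ (¬A → C)`. -/
theorem harrop_rule_admissible (A B C : PropForm)
    (h : IPC (.impl A.neg (.disj B C))) :
    IPC (.disj (.impl A.neg B) (.impl A.neg C)) := by
  have hA : A.neg ∈ insert A.neg ∅ := Set.mem_insert _ _
  have hBC : Deriv ∅ (insert A.neg ∅) (.disj B C) := .implE (h.mono (Set.empty_subset _)) (.hyp hA)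
  obtain ⟨-, hB | hC⟩ := Slash.of_deriv hBC (Set.forall_insert_of_forall (by simp) (.neg_of_mem hA))
  · exact .orI1 (.implI hB.deriv)
  · exact .orI2 (.implI hC.deriv)
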